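/- arXiv:1608.06712 — 2 statements merged into one kernel-verified Lean document; each statement's English description precedes it below -/
import Mathlib

section
/- If Π: B → F is a morphism of double groupoids over the same lateral groupoids V and H and base P, then the double kernel Ker(Π) = {B ∈ B : Π(B) = Θ_p for some p ∈ P} is contained in the abelian group bundle K(B) of B, and is itself an abelian group bundle over P. -/
/-!
Since `Π` preserves sides and identity boxes, `Π A = Θ_q` holds exactly when `Π A = Π Θ_p` for
some `p`, and then `A` has the sides of `Θ_p`. As `Π` preserves vertical composition and hence
vertical inverses, and `Θ_p` is its own square and inverse, this kernel is closed under both.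
On a fiber of `K(B)`, interchange with `Θ_p` as the common unit is the Eckmann–Hilton argument:
vertical and horizontal composition agree and are commutative.
-/

/-- A (discrete) double groupoid: a set of boxes `B` with two compatible groupoid
structures, with horizontal edge groupoid `H` and vertical edge groupoid `V`,
both over a common base `P`. -/
structure DGpd (B : Type*) (V : Type*) (H : Type*) (P : Type*) where
  sV : V → P
  eV : V → P
  idV : P → V
  mulV : V → V → V
  invV : V → V
  sH : H → P
  eH : H → P
  idH : P → H
  mulH : H → H → H
  invH : H → H
  t : B → H
  b : B → H
  l : B → V
  r : B → V
  corner_tl : ∀ A, sH (t A) = sV (l A)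
  corner_tr : ∀ A, eH (t A) = sV (r A)
  corner_bl : ∀ A, sH (b A) = eV (l A)
  corner_br : ∀ A, eH (b A) = eV (r A)
  idh : V → B
  idv : H → B
  hc : B → B → B
  vc : B → B → B
  hi : B → B
  vi : B → B
  -- groupoid axioms for V
  sV_id : ∀ p, sV (idV p) = p
  eV_id : ∀ p, eV (idV p) = p
  sV_mul : ∀ g h, eV g = sV h → sV (mulV g h) = sV g
  eV_mul : ∀ g h, eV g = sV h → eV (mulV g h) = eV h
  mulV_assoc : ∀ g h k, eV g = sV h → eV h = sV k →
    mulV (mulV g h) k = mulV g (mulV h k)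
  idV_mul : ∀ g, mulV (idV (sV g)) g = g
  mulV_id : ∀ g, mulV g (idV (eV g)) = g
  sV_inv : ∀ g, sV (invV g) = eV g
  eV_inv : ∀ g, eV (invV g) = sV g
  mulV_inv : ∀ g, mulV g (invV g) = idV (sV g)
  invV_mul : ∀ g, mulV (invV g) g = idV (eV g)
  -- groupoid axioms for H
  sH_id : ∀ p, sH (idH p) = p
  eH_id : ∀ p, eH (idH p) = p
  sH_mul : ∀ x y, eH x = sH y → sH (mulH x y) = sH x
  eH_mul : ∀ x y, eH x = sH y → eH (mulH x y) = eH y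
  mulH_assoc : ∀ x y z, eH x = sH y → eH y = sH z →
    mulH (mulH x y) z = mulH x (mulH y z)
  idH_mul : ∀ x, mulH (idH (sH x)) x = x
  mulH_id : ∀ x, mulH x (idH (eH x)) = x
  sH_inv : ∀ x, sH (invH x) = eH x
  eH_inv : ∀ x, eH (invH x) = sH x
  mulH_inv : ∀ x, mulH x (invH x) = idH (sH x)
  invH_mul : ∀ x, mulH (invH x) x = idH (eH x)
  -- sides of identity boxes
  idh_t : ∀ g, t (idh g) = idH (sV g)
  idh_b : ∀ g, b (idh g) = idH (eV g)
  idh_l : ∀ g, l (idh g) = g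
  idh_r : ∀ g, r (idh g) = g
  idv_t : ∀ x, t (idv x) = x
  idv_b : ∀ x, b (idv x) = x
  idv_l : ∀ x, l (idv x) = idV (sH x)
  idv_r : ∀ x, r (idv x) = idV (eH x)
  -- horizontal groupoid structure on boxes (base V)
  hc_t : ∀ A B, r A = l B → t (hc A B) = mulH (t A) (t B)
  hc_b : ∀ A B, r A = l B → b (hc A B) = mulH (b A) (b B)
  hc_l : ∀ A B, r A = l B → l (hc A B) = l A
  hc_r : ∀ A B, r A = l B → r (hc A B) = r B
  hc_assoc : ∀ A B C, r A = l B → r B = l C → hc (hc A B) C = hc A (hc B C)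
  idh_hc : ∀ A, hc (idh (l A)) A = A
  hc_idh : ∀ A, hc A (idh (r A)) = A
  hi_l : ∀ A, l (hi A) = r A
  hi_r : ∀ A, r (hi A) = l A
  hi_t : ∀ A, t (hi A) = invH (t A)
  hi_b : ∀ A, b (hi A) = invH (b A)
  hc_hi : ∀ A, hc A (hi A) = idh (l A)
  hi_hc : ∀ A, hc (hi A) A = idh (r A)
  -- vertical groupoid structure on boxes (base H)
  vc_t : ∀ A B, b A = t B → t (vc A B) = t A
  vc_b : ∀ A B, b A = t B → b (vc A B) = b B
  vc_l : ∀ A B, b A = t B → l (vc A B) = mulV (l A) (l B)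
  vc_r : ∀ A B, b A = t B → r (vc A B) = mulV (r A) (r B)
  vc_assoc : ∀ A B C, b A = t B → b B = t C → vc (vc A B) C = vc A (vc B C)
  idv_vc : ∀ A, vc (idv (t A)) A = A
  vc_idv : ∀ A, vc A (idv (b A)) = A
  vi_t : ∀ A, t (vi A) = b A
  vi_b : ∀ A, b (vi A) = t A
  vi_l : ∀ A, l (vi A) = invV (l A)
  vi_r : ∀ A, r (vi A) = invV (r A)
  vc_vi : ∀ A, vc A (vi A) = idv (t A)
  vi_vc : ∀ A, vc (vi A) A = idv (b A)
  -- the identity boxes are functorial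
  idh_mulV : ∀ g h, eV g = sV h → vc (idh g) (idh h) = idh (mulV g h)
  idv_mulH : ∀ x y, eH x = sH y → hc (idv x) (idv y) = idv (mulH x y)
  id_id : ∀ p, idh (idV p) = idv (idH p)
  -- the interchange law
  interchange : ∀ K L M N, r K = l L → r M = l N → b K = t M → b L = t N →
    vc (hc K L) (hc M N) = hc (vc K M) (vc L N)

namespace DGpd

variable {B V H P : Type*} (D : DGpd B V H P)

/-- The totally degenerate box at a point. -/
def Theta (p : P) : B := D.idh (D.idV p)

/-- A box all of whose four sides are identities at `p`; i.e. an element of the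
fiber `K(B)_p` of the abelian group bundle `K(B)`. -/
def InFiber (p : P) (A : B) : Prop :=
  D.t A = D.idH p ∧ D.b A = D.idH p ∧ D.l A = D.idV p ∧ D.r A = D.idV p

/-- A box belonging to the core groupoid: its top and right sides are identities. -/
def IsCore (A : B) : Prop :=
  (∃ p, D.t A = D.idH p) ∧ (∃ p, D.r A = D.idV p)

/-- Source of the core groupoid: the bottom-left vertex. -/
def coreSrc (A : B) : P := D.sH (D.b A)

/-- Target of the core groupoid: the top-right vertex. -/
def coreTgt (A : B) : P := D.eH (D.t A)

/-- Core multiplication `E ∘ F`. -/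
def coreMul (E F : B) : B :=
  D.vc (D.hc (D.idh (D.l F)) F) (D.hc E (D.idv (D.b F)))

/-- Core inversion `E ↦ E^{(-1)} = (E ⋅ id_v(b(E)^{-1}))^v`. -/
def coreInv (E : B) : B := D.vi (D.hc E (D.idv (D.invH (D.b E))))

/-- The core action of the core groupoid on boxes:
`E ⊸ A = {(id l(A), A) over (E, id b(A))}`. -/
def coreAct (E A : B) : B :=
  D.vc (D.hc (D.idh (D.l A)) A) (D.hc E (D.idv (D.b A)))

theorem Theta_t (p : P) : D.t (D.Theta p) = D.idH p := by
  rw [Theta, D.idh_t, D.sV_id]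

theorem Theta_b (p : P) : D.b (D.Theta p) = D.idH p := by
  rw [Theta, D.idh_b, D.eV_id]

theorem Theta_l (p : P) : D.l (D.Theta p) = D.idV p := D.idh_l _

theorem Theta_r (p : P) : D.r (D.Theta p) = D.idV p := D.idh_r _

theorem inFiber_Theta (p : P) : D.InFiber p (D.Theta p) :=
  ⟨D.Theta_t p, D.Theta_b p, D.Theta_l p, D.Theta_r p⟩

theorem mulV_idV_idV (p : P) : D.mulV (D.idV p) (D.idV p) = D.idV p := by
  have h := D.idV_mul (D.idV p)
  rwa [D.sV_id] at h

theorem invV_idV (p : P) : D.invV (D.idV p) = D.idV p := by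
  have h := D.idV_mul (D.invV (D.idV p))
  rwa [D.sV_inv, D.eV_id, D.mulV_inv, D.sV_id, eq_comm] at h

section

variable {D} {p : P} {A A' X Y : B}

theorem hc_Theta (h : D.r A = D.idV p) : D.hc A (D.Theta p) = A := by
  rw [Theta, ← h, D.hc_idh]

theorem Theta_hc (h : D.l A = D.idV p) : D.hc (D.Theta p) A = A := by
  rw [Theta, ← h, D.idh_hc]

theorem vc_Theta (h : D.b A = D.idH p) : D.vc A (D.Theta p) = A := by
  rw [Theta, D.id_id, ← h, D.vc_idv]

theorem Theta_vc (h : D.t A = D.idH p) : D.vc (D.Theta p) A = A := by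
  rw [Theta, D.id_id, ← h, D.idv_vc]

theorem vc_vi_eq_Theta (h : D.t A = D.idH p) : D.vc A (D.vi A) = D.Theta p := by
  rw [D.vc_vi, h, Theta, D.id_id]

theorem eq_vi_of_vc_eq_idv (hXY : D.b X = D.t Y) (h : D.vc X Y = D.idv (D.t X)) :
    Y = D.vi X :=
  calc Y = D.vc (D.vc (D.vi X) X) Y := by rw [D.vi_vc, hXY, D.idv_vc]
    _ = D.vc (D.vi X) (D.vc X Y) := D.vc_assoc _ _ _ (D.vi_b X) hXY
    _ = D.vi X := by rw [h, ← D.vi_b, D.vc_idv]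

theorem vi_Theta (p : P) : D.vi (D.Theta p) = D.Theta p :=
  (eq_vi_of_vc_eq_idv (by rw [Theta_b, Theta_t])
    (by rw [Theta_vc (D.Theta_t p), Theta_t, Theta, D.id_id])).symm

theorem InFiber.eq (hp : D.InFiber p A) {q : P} (hq : D.InFiber q A) : p = q := by
  have h := congrArg D.sH (hp.1.symm.trans hq.1)
  rwa [D.sH_id, D.sH_id] at h

theorem InFiber.vc (hA : D.InFiber p A) (hA' : D.InFiber p A') :
    D.InFiber p (D.vc A A') := by
  obtain ⟨htA, hbA, hlA, hrA⟩ := hA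
  obtain ⟨htA', hbA', hlA', hrA'⟩ := hA'
  have h : D.b A = D.t A' := hbA.trans htA'.symm
  refine ⟨?_, ?_, ?_, ?_⟩
  · rw [D.vc_t _ _ h, htA]
  · rw [D.vc_b _ _ h, hbA']
  · rw [D.vc_l _ _ h, hlA, hlA', D.mulV_idV_idV]
  · rw [D.vc_r _ _ h, hrA, hrA', D.mulV_idV_idV]

theorem InFiber.vi (hA : D.InFiber p A) : D.InFiber p (D.vi A) := by
  obtain ⟨htA, hbA, hlA, hrA⟩ := hA
  exact ⟨by rw [D.vi_t, hbA], by rw [D.vi_b, htA], by rw [D.vi_l, hlA, D.invV_idV],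
    by rw [D.vi_r, hrA, D.invV_idV]⟩

theorem InFiber.vc_eq_hc (hA : D.InFiber p A) (hA' : D.InFiber p A') :
    D.vc A A' = D.hc A A' := by
  obtain ⟨htA, hbA, hlA, hrA⟩ := hA
  obtain ⟨htA', hbA', hlA', hrA'⟩ := hA'
  have h := D.interchange A (D.Theta p) (D.Theta p) A'
    (by rw [hrA, Theta_l]) (by rw [Theta_r, hlA']) (by rw [hbA, Theta_t]) (by rw [Theta_b, htA'])
  rwa [hc_Theta hrA, Theta_hc hlA', vc_Theta hbA, Theta_vc htA'] at h

theorem InFiber.vc_eq_hc_swap (hA : D.InFiber p A) (hA' : D.InFiber p A') :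
    D.vc A A' = D.hc A' A := by
  obtain ⟨htA, hbA, hlA, hrA⟩ := hA
  obtain ⟨htA', hbA', hlA', hrA'⟩ := hA'
  have h := D.interchange (D.Theta p) A A' (D.Theta p)
    (by rw [Theta_r, hlA]) (by rw [hrA', Theta_l]) (by rw [Theta_b, htA']) (by rw [hbA, Theta_t])
  rwa [Theta_hc hlA, hc_Theta hrA', Theta_vc htA', vc_Theta hbA] at h

theorem InFiber.vc_comm (hA : D.InFiber p A) (hA' : D.InFiber p A') :
    D.vc A A' = D.vc A' A :=
  (hA.vc_eq_hc_swap hA').trans (hA'.vc_eq_hc hA).symm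

end

end DGpd

section Stmt3

variable {B F V H P : Type*}

/-- `Π : B → F` is a morphism of double groupoids over the same lateral groupoids. -/
def IsDGpdHom (D1 : DGpd B V H P) (D2 : DGpd F V H P) (Pi : B → F) : Prop :=
  (∀ A, D2.t (Pi A) = D1.t A) ∧ (∀ A, D2.b (Pi A) = D1.b A) ∧
  (∀ A, D2.l (Pi A) = D1.l A) ∧ (∀ A, D2.r (Pi A) = D1.r A) ∧
  (∀ A A', D1.r A = D1.l A' → Pi (D1.hc A A') = D2.hc (Pi A) (Pi A')) ∧
  (∀ A A', D1.b A = D1.t A' → Pi (D1.vc A A') = D2.vc (Pi A) (Pi A')) ∧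
  (∀ g : V, Pi (D1.idh g) = D2.idh g) ∧ (∀ x : H, Pi (D1.idv x) = D2.idv x)

/-- The double kernel of a morphism of double groupoids. -/
def InDKer (D2 : DGpd F V H P) (Pi : B → F) (A : B) : Prop :=
  ∃ p : P, Pi A = D2.Theta p

namespace IsDGpdHom

variable {D1 : DGpd B V H P} {D2 : DGpd F V H P} {Pi : B → F} {p : P} {A A' : B}

theorem map_vc (hPi : IsDGpdHom D1 D2 Pi) (h : D1.b A = D1.t A') :
    Pi (D1.vc A A') = D2.vc (Pi A) (Pi A') :=
  hPi.2.2.2.2.2.1 A A' h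

theorem map_idh (hPi : IsDGpdHom D1 D2 Pi) (g : V) : Pi (D1.idh g) = D2.idh g :=
  hPi.2.2.2.2.2.2.1 g

theorem idH_sV_eq (hPi : IsDGpdHom D1 D2 Pi) (g : V) :
    D2.idH (D2.sV g) = D1.idH (D1.sV g) := by
  obtain ⟨ht, -, -, -, -, -, hidh, -⟩ := hPi
  rw [← D2.idh_t, ← hidh, ht, D1.idh_t]

theorem idV_sH_eq (hPi : IsDGpdHom D1 D2 Pi) (x : H) :
    D2.idV (D2.sH x) = D1.idV (D1.sH x) := by
  obtain ⟨-, -, hl, -, -, -, -, hidv⟩ := hPi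
  rw [← D2.idv_l, ← hidv, hl, D1.idv_l]

theorem map_Theta (hPi : IsDGpdHom D1 D2 Pi) (p : P) :
    Pi (D1.Theta p) = D2.Theta (D2.sH (D1.idH p)) := by
  rw [DGpd.Theta, hPi.map_idh, DGpd.Theta, hPi.idV_sH_eq, D1.sH_id]

theorem exists_Theta_eq_map_Theta (hPi : IsDGpdHom D1 D2 Pi) (q : P) :
    ∃ p, D2.Theta q = Pi (D1.Theta p) := by
  have hH : D2.idH q = D1.idH (D1.sV (D2.idV q)) := by
    rw [← hPi.idH_sV_eq, D2.sV_id]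
  refine ⟨D1.sV (D2.idV q), ?_⟩
  rw [hPi.map_Theta, ← hH, D2.sH_id]

theorem inDKer_iff (hPi : IsDGpdHom D1 D2 Pi) :
    InDKer D2 Pi A ↔ ∃ p, Pi A = Pi (D1.Theta p) := by
  constructor
  · rintro ⟨q, hq⟩
    obtain ⟨p, hp⟩ := hPi.exists_Theta_eq_map_Theta q
    exact ⟨p, hq.trans hp⟩
  · rintro ⟨p, hp⟩
    exact ⟨_, hp.trans (hPi.map_Theta p)⟩

theorem inDKer_Theta (hPi : IsDGpdHom D1 D2 Pi) (p : P) : InDKer D2 Pi (D1.Theta p) :=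
  hPi.inDKer_iff.2 ⟨p, rfl⟩

theorem inFiber_of_map_eq (hPi : IsDGpdHom D1 D2 Pi) (h : Pi A = Pi A')
    (hA' : D1.InFiber p A') : D1.InFiber p A := by
  obtain ⟨ht, hb, hl, hr, -⟩ := hPi
  exact ⟨by rw [← ht, h, ht, hA'.1], by rw [← hb, h, hb, hA'.2.1],
    by rw [← hl, h, hl, hA'.2.2.1], by rw [← hr, h, hr, hA'.2.2.2]⟩

theorem exists_inFiber_of_inDKer (hPi : IsDGpdHom D1 D2 Pi) (hA : InDKer D2 Pi A) :
    ∃ p, D1.InFiber p A := by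
  obtain ⟨p, hp⟩ := hPi.inDKer_iff.1 hA
  exact ⟨p, hPi.inFiber_of_map_eq hp (D1.inFiber_Theta p)⟩

theorem map_eq_map_Theta (hPi : IsDGpdHom D1 D2 Pi) (hK : InDKer D2 Pi A)
    (hA : D1.InFiber p A) : Pi A = Pi (D1.Theta p) := by
  obtain ⟨q, hq⟩ := hPi.inDKer_iff.1 hK
  rwa [hA.eq (hPi.inFiber_of_map_eq hq (D1.inFiber_Theta q))]

theorem map_vi (hPi : IsDGpdHom D1 D2 Pi) (A : B) : Pi (D1.vi A) = D2.vi (Pi A) := by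
  obtain ⟨ht, hb, -, -, -, -, -, hidv⟩ := id hPi
  refine D2.eq_vi_of_vc_eq_idv (by rw [hb, ht, D1.vi_t]) ?_
  rw [← hPi.map_vc (D1.vi_t A).symm, D1.vc_vi, hidv, ht]

theorem inDKer_vc (hPi : IsDGpdHom D1 D2 Pi) (hK : InDKer D2 Pi A) (hK' : InDKer D2 Pi A')
    (hA : D1.InFiber p A) (hA' : D1.InFiber p A') : InDKer D2 Pi (D1.vc A A') := by
  refine hPi.inDKer_iff.2 ⟨p, ?_⟩
  rw [hPi.map_vc (hA.2.1.trans hA'.1.symm), hPi.map_eq_map_Theta hK hA,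
    hPi.map_eq_map_Theta hK' hA', ← hPi.map_vc (by rw [D1.Theta_b, D1.Theta_t]),
    DGpd.Theta_vc (D1.Theta_t p)]

theorem inDKer_vi (hPi : IsDGpdHom D1 D2 Pi) (hK : InDKer D2 Pi A) :
    InDKer D2 Pi (D1.vi A) := by
  obtain ⟨p, hp⟩ := hPi.inDKer_iff.1 hK
  exact hPi.inDKer_iff.2 ⟨p, by rw [hPi.map_vi, hp, ← hPi.map_vi, D1.vi_Theta]⟩

end IsDGpdHom

/-- The double kernel of a morphism of double groupoids is contained in
the abelian group bundle `K(B)` associated to `B`, and is itself an abelian group bundle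
over `P`: every kernel element lies in some fiber `K(B)_p`, each fiber of the kernel
contains `Θ_p`, and is closed under the (commutative) composition and under inverses. -/
theorem dker_sub_bundle_and_abelian_bundle
    (D1 : DGpd B V H P) (D2 : DGpd F V H P) (Pi : B → F)
    (hPi : IsDGpdHom D1 D2 Pi) :
    (∀ A, InDKer D2 Pi A → ∃ p, D1.InFiber p A) ∧
    (∀ p : P, InDKer D2 Pi (D1.Theta p)) ∧
    (∀ p A A', InDKer D2 Pi A → InDKer D2 Pi A' →
      D1.InFiber p A → D1.InFiber p A' →
      InDKer D2 Pi (D1.vc A A') ∧ D1.InFiber p (D1.vc A A') ∧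
        D1.vc A A' = D1.vc A' A ∧ D1.vc A A' = D1.hc A A') ∧
    (∀ p A, InDKer D2 Pi A → D1.InFiber p A →
      InDKer D2 Pi (D1.vi A) ∧ D1.InFiber p (D1.vi A) ∧
        D1.vc A (D1.vi A) = D1.Theta p) := by
  refine ⟨fun A => hPi.exists_inFiber_of_inDKer, hPi.inDKer_Theta, ?_, ?_⟩
  · intro p A A' hK hK' hA hA'
    exact ⟨hPi.inDKer_vc hK hK' hA hA', hA.vc hA', hA.vc_comm hA', hA.vc_eq_hc hA'⟩
  · intro p A hK hA
    exact ⟨hPi.inDKer_vi hK, hA.vi, D1.vc_vi_eq_Theta hA.1⟩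

end Stmt3
end

section
/- If two smash-product double groupoid extensions K♯_{σ,τ}F and K♯_{σ',τ'}F determined by normalized total 1-cocycles (σ,τ) and (σ',τ') are equivalent as extensions of F by K, then (σ,τ) and (σ',τ') are cohomologous: there exists λ: F → K with p∘λ = γ such that σ = σ' + d_V λ and τ = τ' + d_H λ. -/
/-- A bundle of abelian groups over `P`, presented with globally defined (partial in
spirit) operations: all group axioms are required fiberwise. -/
structure AbBundle (P : Type*) (K : Type*) where
  proj : K → P
  add : K → K → K
  zero : P → K
  neg : K → K
  proj_add : ∀ a b, proj a = proj b → proj (add a b) = proj a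
  proj_zero : ∀ p, proj (zero p) = p
  proj_neg : ∀ a, proj (neg a) = proj a
  add_assoc : ∀ a b c, proj a = proj b → proj b = proj c →
    add (add a b) c = add a (add b c)
  add_comm : ∀ a b, proj a = proj b → add a b = add b a
  zero_add : ∀ a, add (zero (proj a)) a = a
  add_neg : ∀ a, add a (neg a) = zero (proj a)

namespace AbBundle

variable {P K : Type*} (Kb : AbBundle P K)

/-- Subtraction in the bundle. -/
def sub (a b : K) : K := Kb.add a (Kb.neg b)

end AbBundle

/-- An action of a double groupoid `(B; V, H; P)` on an abelian group bundle
`K → P`: the groupoids `V` and `H` act by group bundle automorphisms, compatibly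
via `l(A)⁻¹·(t(A)·k) = b(A)·(r(A)⁻¹·k)`; i.e. `K` is a module over the double
groupoid. -/
structure DAction {B V H P K : Type*} (D : DGpd B V H P) (Kb : AbBundle P K) where
  aV : V → K → K
  aH : H → K → K
  aV_proj : ∀ g k, Kb.proj k = D.eV g → Kb.proj (aV g k) = D.sV g
  aV_id : ∀ k, aV (D.idV (Kb.proj k)) k = k
  aV_mul : ∀ g h k, D.eV g = D.sV h → Kb.proj k = D.eV h →
    aV (D.mulV g h) k = aV g (aV h k)
  aV_add : ∀ g k k', Kb.proj k = Kb.proj k' → Kb.proj k = D.eV g →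
    aV g (Kb.add k k') = Kb.add (aV g k) (aV g k')
  aV_zero : ∀ g, aV g (Kb.zero (D.eV g)) = Kb.zero (D.sV g)
  aH_proj : ∀ x k, Kb.proj k = D.eH x → Kb.proj (aH x k) = D.sH x
  aH_id : ∀ k, aH (D.idH (Kb.proj k)) k = k
  aH_mul : ∀ x y k, D.eH x = D.sH y → Kb.proj k = D.eH y →
    aH (D.mulH x y) k = aH x (aH y k)
  aH_add : ∀ x k k', Kb.proj k = Kb.proj k' → Kb.proj k = D.eH x →
    aH x (Kb.add k k') = Kb.add (aH x k) (aH x k')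
  aH_zero : ∀ x, aH x (Kb.zero (D.eH x)) = Kb.zero (D.sH x)
  compat : ∀ A k, Kb.proj k = D.eH (D.t A) →
    aV (D.invV (D.l A)) (aH (D.t A) k) = aH (D.b A) (aV (D.invV (D.r A)) k)

section CocycleDefs

variable {B V H P K : Type*} (D : DGpd B V H P) (Kb : AbBundle P K) (Ac : DAction D Kb)

/-- The vertical coboundary `d_V^{1,1} λ` of a `1×1`-cochain, on a vertically
composable pair: `λ(G) - λ({F over G}) + l(G)⁻¹·λ(F)`. -/
def dV11 (lam : B → K) (F G : B) : K :=
  Kb.add (Kb.sub (lam G) (lam (D.vc F G))) (Ac.aV (D.invV (D.l G)) (lam F))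

/-- The horizontal coboundary `d_H^{1,1} λ` of a `1×1`-cochain, on a horizontally
composable pair: `b(F)·λ(G) - λ({F G}) + λ(F)`. -/
def dH11 (lam : B → K) (F G : B) : K :=
  Kb.add (Kb.sub (Ac.aH (D.b F) (lam G)) (lam (D.hc F G))) (lam F)

/-- `(σ, τ)` is a total 1-cocycle: it takes values in the prescribed fibers, `σ` is a
vertical 2-cocycle, `τ` is a horizontal 2-cocycle, and the mixed (interchange)
compatibility holds. -/
def IsTotal1Cocycle (sg ta : B → B → K) : Prop :=
  (∀ F G, D.b F = D.t G → Kb.proj (sg F G) = D.eV (D.l G)) ∧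
  (∀ F G, D.r F = D.l G → Kb.proj (ta F G) = D.eV (D.l F)) ∧
  (∀ F G Hb, D.r F = D.l G → D.r G = D.l Hb →
      Kb.add (ta F G) (ta (D.hc F G) Hb) =
        Kb.add (ta F (D.hc G Hb)) (Ac.aH (D.b F) (ta G Hb))) ∧
  (∀ F G Hb, D.b F = D.t G → D.b G = D.t Hb →
      Kb.add (sg G Hb) (sg F (D.vc G Hb)) =
        Kb.add (Ac.aV (D.invV (D.l Hb)) (sg F G)) (sg (D.vc F G) Hb)) ∧
  (∀ F G Hb J, D.r F = D.l G → D.b F = D.t Hb → D.b G = D.t J → D.r Hb = D.l J →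
      Kb.add (Kb.add (Ac.aV (D.invV (D.l Hb)) (ta F G)) (ta Hb J))
          (sg (D.hc F G) (D.hc Hb J)) =
        Kb.add (Kb.add (Ac.aH (D.b Hb) (sg G J)) (sg F Hb))
          (ta (D.vc F Hb) (D.vc G J)))

/-- `(σ, τ)` is normalized: each cocycle vanishes as soon as one of its arguments is a
degenerate (identity) box. -/
def IsNormalizedPair (sg ta : B → B → K) : Prop :=
  (∀ F G, D.b F = D.t G → ((∃ g, F = D.idh g) ∨ (∃ g, G = D.idh g)) →
    sg F G = Kb.zero (D.eV (D.l G))) ∧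
  (∀ F G, D.r F = D.l G → ((∃ x, F = D.idv x) ∨ (∃ x, G = D.idv x)) →
    ta F G = Kb.zero (D.eV (D.l F)))

end CocycleDefs

section SmashDef

variable {B V H P K : Type*}

/-- The underlying set of the smash product `K ♯ F`: the fiber product
`K ×_{p,γ} F` along the left-bottom vertex map `γ`. -/
def SmashCarrier (D : DGpd B V H P) (Kb : AbBundle P K) : Type _ :=
  {x : K × B // Kb.proj x.1 = D.eV (D.l x.2)}

/-- `DB` is the smash-product double groupoid structure `K ♯_{σ,τ} F` on
`K ×_{p,γ} F` determined by the total 1-cocycle `(σ, τ)`. -/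
def IsSmashStructure (D : DGpd B V H P) (Kb : AbBundle P K) (Ac : DAction D Kb)
    (sg ta : B → B → K) (DB : DGpd (SmashCarrier D Kb) V H P) : Prop :=
  DB.sV = D.sV ∧ DB.eV = D.eV ∧ DB.idV = D.idV ∧ DB.mulV = D.mulV ∧
  DB.invV = D.invV ∧
  DB.sH = D.sH ∧ DB.eH = D.eH ∧ DB.idH = D.idH ∧ DB.mulH = D.mulH ∧
  DB.invH = D.invH ∧
  (∀ x, DB.t x = D.t x.val.2) ∧ (∀ x, DB.b x = D.b x.val.2) ∧
  (∀ x, DB.l x = D.l x.val.2) ∧ (∀ x, DB.r x = D.r x.val.2) ∧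
  (∀ g : V, (DB.idh g).val = (Kb.zero (D.eV g), D.idh g)) ∧
  (∀ x : H, (DB.idv x).val = (Kb.zero (D.sH x), D.idv x)) ∧
  (∀ x y, D.r x.val.2 = D.l y.val.2 →
    (DB.hc x y).val =
      (Kb.add (Kb.add x.val.1 (Ac.aH (D.b x.val.2) y.val.1)) (ta x.val.2 y.val.2),
        D.hc x.val.2 y.val.2)) ∧
  (∀ x y, D.b x.val.2 = D.t y.val.2 →
    (DB.vc x y).val =
      (Kb.add (Kb.add (Ac.aV (D.invV (D.l y.val.2)) x.val.1) y.val.1)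
          (sg x.val.2 y.val.2),
        D.vc x.val.2 y.val.2))

end SmashDef


/-!
An equivalence `Φ` of extensions is a translation by a cochain: putting `λ F := fib Φ(0, F)`, one
gets `Φ(k, F) = (k + λ F, F)`. Indeed `(k, F)` is the horizontal product of `(k, id_h (l F))` and
`(0, F)`, and `Φ` fixes every element over a horizontal identity box `id_h g`, because such an
element is the vertical product of an element over `Θ (s g)` (fixed, as `Φ` is the identity on
`K`) with the identity box `id_h g`. The unit laws of a smash product force `τ(id_h, -)` and
`σ(Θ, id_h)` to vanish, so these two products are plain sums in `K`. Applying `Φ` to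
`(0, F)(0, G)` and to `{(0, F) over (0, G)}` and comparing fibers then gives
`τ = τ' + d_H λ` and `σ = σ' + d_V λ`.
-/

namespace AbBundle

variable {P K : Type*} (Kb : AbBundle P K)

theorem zero_add_of_proj_eq {a : K} {p : P} (h : Kb.proj a = p) : Kb.add (Kb.zero p) a = a := by
  subst h; exact Kb.zero_add a

theorem add_zero_of_proj_eq {a : K} {p : P} (h : Kb.proj a = p) : Kb.add a (Kb.zero p) = a := by
  rw [Kb.add_comm _ _ (h.trans (Kb.proj_zero p).symm), Kb.zero_add_of_proj_eq h]

def Fiber (p : P) : Type _ := {k : K // Kb.proj k = p}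

instance (p : P) : Add (Kb.Fiber p) :=
  ⟨fun a b => ⟨Kb.add a.1 b.1, (Kb.proj_add _ _ (a.2.trans b.2.symm)).trans a.2⟩⟩

instance (p : P) : Zero (Kb.Fiber p) := ⟨⟨Kb.zero p, Kb.proj_zero p⟩⟩

instance (p : P) : Neg (Kb.Fiber p) := ⟨fun a => ⟨Kb.neg a.1, (Kb.proj_neg a.1).trans a.2⟩⟩

instance (p : P) : AddCommGroup (Kb.Fiber p) where
  add_assoc a b c := Subtype.ext (Kb.add_assoc _ _ _ (a.2.trans b.2.symm) (b.2.trans c.2.symm))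
  zero_add a := Subtype.ext (Kb.zero_add_of_proj_eq a.2)
  add_zero a := Subtype.ext (Kb.add_zero_of_proj_eq a.2)
  add_comm a b := Subtype.ext (Kb.add_comm _ _ (a.2.trans b.2.symm))
  neg_add_cancel a := Subtype.ext <| by
    change Kb.add (Kb.neg a.1) a.1 = Kb.zero p
    rw [Kb.add_comm _ _ (Kb.proj_neg a.1), Kb.add_neg, a.2]
  nsmul := nsmulRec
  zsmul := zsmulRec

theorem eq_add_sub_add_of_add_eq {p : P} {a b c d e : K}
    (ha : Kb.proj a = p) (hb : Kb.proj b = p) (hc : Kb.proj c = p)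
    (hd : Kb.proj d = p) (he : Kb.proj e = p)
    (h : Kb.add a b = Kb.add (Kb.add c d) e) :
    a = Kb.add e (Kb.add (Kb.sub d b) c) := by
  let A : Kb.Fiber p := ⟨a, ha⟩
  let B : Kb.Fiber p := ⟨b, hb⟩
  let C : Kb.Fiber p := ⟨c, hc⟩
  let D : Kb.Fiber p := ⟨d, hd⟩
  let E : Kb.Fiber p := ⟨e, he⟩
  have hA : A = C + D + E - B := eq_sub_of_add_eq (Subtype.ext h)
  have : A = E + (D + -B + C) := by rw [hA]; abel
  exact congrArg Subtype.val this

end AbBundle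

namespace DAction

variable {B V H P K : Type*} {D : DGpd B V H P} {Kb : AbBundle P K} (Ac : DAction D Kb)

theorem aH_idH {k : K} {p : P} (hk : Kb.proj k = p) : Ac.aH (D.idH p) k = k := by
  subst hk; exact Ac.aH_id k

theorem aV_invV_aV {g : V} {k : K} (hk : Kb.proj k = D.eV g) :
    Ac.aV (D.invV g) (Ac.aV g k) = k := by
  rw [← Ac.aV_mul _ _ _ (D.eV_inv g) hk, D.invV_mul, ← hk, Ac.aV_id]

theorem aV_invV_zero (g : V) : Ac.aV (D.invV g) (Kb.zero (D.sV g)) = Kb.zero (D.eV g) := by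
  simpa only [D.eV_inv, D.sV_inv] using Ac.aV_zero (D.invV g)

end DAction

theorem DGpd.b_idv_eq_t_idh {B V H P : Type*} (D : DGpd B V H P) (g : V) :
    D.b (D.idv (D.idH (D.sV g))) = D.t (D.idh g) := by
  rw [D.idv_b, D.idh_t]

namespace SmashCarrier

variable {B V H P K : Type*} {D : DGpd B V H P} {Kb : AbBundle P K}

def mk (k : K) (F : B) (h : Kb.proj k = D.eV (D.l F)) : SmashCarrier D Kb := ⟨(k, F), h⟩

def fib (x : SmashCarrier D Kb) : K := x.val.1

def box (x : SmashCarrier D Kb) : B := x.val.2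

theorem proj_fib (x : SmashCarrier D Kb) : Kb.proj x.fib = D.eV (D.l x.box) := x.2

@[simp] theorem fib_mk (k : K) (F : B) (h : Kb.proj k = D.eV (D.l F)) :
    (mk k F h : SmashCarrier D Kb).fib = k := rfl

@[simp] theorem box_mk (k : K) (F : B) (h : Kb.proj k = D.eV (D.l F)) :
    (mk k F h : SmashCarrier D Kb).box = F := rfl

@[ext] theorem ext {x y : SmashCarrier D Kb} (hfib : x.fib = y.fib) (hbox : x.box = y.box) :
    x = y :=
  Subtype.ext (Prod.ext hfib hbox)

variable (D Kb) in
def ofBox (F : B) : SmashCarrier D Kb := mk (Kb.zero (D.eV (D.l F))) F (Kb.proj_zero _)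

end SmashCarrier

open SmashCarrier

namespace IsSmashStructure

variable {B V H P K : Type*} {D : DGpd B V H P} {Kb : AbBundle P K} {Ac : DAction D Kb}
  {sg ta : B → B → K} {DB : DGpd (SmashCarrier D Kb) V H P}
  (h : IsSmashStructure D Kb Ac sg ta DB)
include h

theorem t_eq (x : SmashCarrier D Kb) : DB.t x = D.t x.box := by
  obtain ⟨-, -, -, -, -, -, -, -, -, -, ht, -⟩ := h; exact ht x

theorem l_eq (x : SmashCarrier D Kb) : DB.l x = D.l x.box := by
  obtain ⟨-, -, -, -, -, -, -, -, -, -, -, -, hl, -⟩ := h; exact hl x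

theorem idh_eq (g : V) :
    DB.idh g = mk (Kb.zero (D.eV g)) (D.idh g) (by rw [Kb.proj_zero, D.idh_l]) := by
  obtain ⟨-, -, -, -, -, -, -, -, -, -, -, -, -, -, hidh, -⟩ := h; exact Subtype.ext (hidh g)

theorem idv_eq (x : H) :
    DB.idv x = mk (Kb.zero (D.sH x)) (D.idv x) (by rw [Kb.proj_zero, D.idv_l, D.eV_id]) := by
  obtain ⟨-, -, -, -, -, -, -, -, -, -, -, -, -, -, -, hidv, -⟩ := h; exact Subtype.ext (hidv x)

theorem hc_fib {x y : SmashCarrier D Kb} (hxy : D.r x.box = D.l y.box) :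
    (DB.hc x y).fib = Kb.add (Kb.add x.fib (Ac.aH (D.b x.box) y.fib)) (ta x.box y.box) := by
  obtain ⟨-, -, -, -, -, -, -, -, -, -, -, -, -, -, -, -, hhc, -⟩ := h
  exact congrArg Prod.fst (hhc x y hxy)

theorem hc_box {x y : SmashCarrier D Kb} (hxy : D.r x.box = D.l y.box) :
    (DB.hc x y).box = D.hc x.box y.box := by
  obtain ⟨-, -, -, -, -, -, -, -, -, -, -, -, -, -, -, -, hhc, -⟩ := h
  exact congrArg Prod.snd (hhc x y hxy)

theorem vc_fib {x y : SmashCarrier D Kb} (hxy : D.b x.box = D.t y.box) :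
    (DB.vc x y).fib =
      Kb.add (Kb.add (Ac.aV (D.invV (D.l y.box)) x.fib) y.fib) (sg x.box y.box) := by
  obtain ⟨-, -, -, -, -, -, -, -, -, -, -, -, -, -, -, -, -, hvc⟩ := h
  exact congrArg Prod.fst (hvc x y hxy)

theorem vc_box {x y : SmashCarrier D Kb} (hxy : D.b x.box = D.t y.box) :
    (DB.vc x y).box = D.vc x.box y.box := by
  obtain ⟨-, -, -, -, -, -, -, -, -, -, -, -, -, -, -, -, -, hvc⟩ := h
  exact congrArg Prod.snd (hvc x y hxy)

theorem ta_idh_left_eq_zero (hta : ∀ F G, D.r F = D.l G → Kb.proj (ta F G) = D.eV (D.l F))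
    (G : B) :
    ta (D.idh (D.l G)) G = Kb.zero (D.eV (D.l G)) := by
  have hunit := congrArg fib (DB.idh_hc (ofBox D Kb G))
  rw [h.l_eq, h.idh_eq, h.hc_fib (by exact D.idh_r _)] at hunit
  simp only [ofBox, fib_mk, box_mk] at hunit
  rwa [D.idh_b, Ac.aH_idH (Kb.proj_zero _), Kb.zero_add_of_proj_eq (Kb.proj_zero _),
    Kb.zero_add_of_proj_eq (by rw [hta _ _ (D.idh_r _), D.idh_l])] at hunit

theorem sg_idv_idh_eq_zero (hsg : ∀ F G, D.b F = D.t G → Kb.proj (sg F G) = D.eV (D.l G))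
    (g : V) :
    sg (D.idv (D.idH (D.sV g))) (D.idh g) = Kb.zero (D.eV g) := by
  have hunit := congrArg fib (DB.idv_vc (DB.idh g))
  rw [h.t_eq, h.idh_eq, box_mk, D.idh_t, h.idv_eq, h.vc_fib (by exact D.b_idv_eq_t_idh g)] at hunit
  simp only [fib_mk, box_mk, D.sH_id, D.idh_l] at hunit
  rwa [Ac.aV_invV_zero, Kb.zero_add_of_proj_eq (Kb.proj_zero _),
    Kb.zero_add_of_proj_eq (by rw [hsg _ _ (D.b_idv_eq_t_idh g), D.idh_l])] at hunit

theorem hc_fib_of_box_eq_idh (hta : ∀ F G, D.r F = D.l G → Kb.proj (ta F G) = D.eV (D.l F))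
    {x y : SmashCarrier D Kb} (hx : x.box = D.idh (D.l y.box)) :
    (DB.hc x y).fib = Kb.add x.fib y.fib := by
  have hxy : D.r x.box = D.l y.box := by rw [hx, D.idh_r]
  have hx' : Kb.proj x.fib = D.eV (D.l y.box) := by rw [x.proj_fib, hx, D.idh_l]
  rw [h.hc_fib hxy, hx, h.ta_idh_left_eq_zero hta, D.idh_b, Ac.aH_idH y.proj_fib]
  exact Kb.add_zero_of_proj_eq ((Kb.proj_add _ _ (hx'.trans y.proj_fib.symm)).trans hx')

theorem eq_hc_idh_ofBox (hta : ∀ F G, D.r F = D.l G → Kb.proj (ta F G) = D.eV (D.l F))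
    (z : SmashCarrier D Kb) :
    z = DB.hc (mk z.fib (D.idh (D.l z.box)) (by rw [z.proj_fib, D.idh_l])) (ofBox D Kb z.box) := by
  ext
  · rw [h.hc_fib_of_box_eq_idh hta rfl]
    exact (Kb.add_zero_of_proj_eq z.proj_fib).symm
  · rw [h.hc_box (by exact D.idh_r _)]
    exact (D.idh_hc z.box).symm

theorem eq_vc_idv_idh (hsg : ∀ F G, D.b F = D.t G → Kb.proj (sg F G) = D.eV (D.l G))
    {z : SmashCarrier D Kb} {g : V} (hz : z.box = D.idh g) :
    z = DB.vc
      (mk (Ac.aV g z.fib) (D.idv (D.idH (D.sV g)))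
        (by rw [D.idv_l, D.eV_id, D.sH_id, Ac.aV_proj _ _ (by rw [z.proj_fib, hz, D.idh_l])]))
      (DB.idh g) := by
  have hzg : Kb.proj z.fib = D.eV g := by rw [z.proj_fib, hz, D.idh_l]
  rw [h.idh_eq]
  ext
  · rw [h.vc_fib (by exact D.b_idv_eq_t_idh g)]
    simp only [fib_mk, box_mk, D.idh_l]
    rw [Ac.aV_invV_aV hzg, h.sg_idv_idh_eq_zero hsg, Kb.add_zero_of_proj_eq hzg,
      Kb.add_zero_of_proj_eq hzg]
  · rw [h.vc_box (by exact D.b_idv_eq_t_idh g), box_mk, box_mk, hz]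
    simpa only [D.idh_t] using (D.idv_vc (D.idh g)).symm

theorem hc_ofBox_fib (hta : ∀ F G, D.r F = D.l G → Kb.proj (ta F G) = D.eV (D.l F))
    {F G : B} (hFG : D.r F = D.l G) : (DB.hc (ofBox D Kb F) (ofBox D Kb G)).fib = ta F G := by
  rw [h.hc_fib (by exact hFG)]
  simp only [ofBox, fib_mk, box_mk]
  rw [← hFG, ← D.corner_br, Ac.aH_zero, D.corner_bl, Kb.zero_add_of_proj_eq (Kb.proj_zero _),
    Kb.zero_add_of_proj_eq (hta F G hFG)]

theorem vc_ofBox_fib (hsg : ∀ F G, D.b F = D.t G → Kb.proj (sg F G) = D.eV (D.l G))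
    {F G : B} (hFG : D.b F = D.t G) : (DB.vc (ofBox D Kb F) (ofBox D Kb G)).fib = sg F G := by
  rw [h.vc_fib (by exact hFG)]
  simp only [ofBox, fib_mk, box_mk]
  rw [← D.corner_bl, hFG, D.corner_tl, Ac.aV_invV_zero, Kb.zero_add_of_proj_eq (Kb.proj_zero _),
    Kb.zero_add_of_proj_eq (hsg F G hFG)]

end IsSmashStructure

section ExtensionMorphism

variable {B V H P K : Type*} {D : DGpd B V H P} {Kb : AbBundle P K}

structure IsExtensionMorphism (DB1 DB2 : DGpd (SmashCarrier D Kb) V H P)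
    (Phi : SmashCarrier D Kb → SmashCarrier D Kb) : Prop where
  map_hc : ∀ x y, D.r x.box = D.l y.box → Phi (DB1.hc x y) = DB2.hc (Phi x) (Phi y)
  map_vc : ∀ x y, D.b x.box = D.t y.box → Phi (DB1.vc x y) = DB2.vc (Phi x) (Phi y)
  map_idh : ∀ g, Phi (DB1.idh g) = DB2.idh g
  box_map : ∀ x, (Phi x).box = x.box
  map_of_box_eq_Theta : ∀ x, (∃ p, x.box = D.Theta p) → Phi x = x

def translationCochain (Phi : SmashCarrier D Kb → SmashCarrier D Kb) (F : B) : K :=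
  (Phi (ofBox D Kb F)).fib

variable {Ac : DAction D Kb} {sg ta sg' ta' : B → B → K}
  {DB1 DB2 : DGpd (SmashCarrier D Kb) V H P}
  {Phi : SmashCarrier D Kb → SmashCarrier D Kb}

namespace IsExtensionMorphism

variable (hPhi : IsExtensionMorphism DB1 DB2 Phi)
include hPhi

theorem proj_translationCochain (F : B) :
    Kb.proj (translationCochain Phi F) = D.eV (D.l F) := by
  rw [translationCochain, proj_fib, hPhi.box_map]
  rfl

theorem map_ofBox (F : B) :
    Phi (ofBox D Kb F) =
      SmashCarrier.mk (translationCochain Phi F) F (hPhi.proj_translationCochain F) :=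
  SmashCarrier.ext rfl (hPhi.box_map _)

theorem map_eq_self_of_box_eq_idh
    (h1 : IsSmashStructure D Kb Ac sg ta DB1) (h2 : IsSmashStructure D Kb Ac sg' ta' DB2)
    (hsg : ∀ F G, D.b F = D.t G → Kb.proj (sg F G) = D.eV (D.l G))
    (hsg' : ∀ F G, D.b F = D.t G → Kb.proj (sg' F G) = D.eV (D.l G))
    {z : SmashCarrier D Kb} {g : V} (hz : z.box = D.idh g) : Phi z = z := by
  conv_lhs => rw [h1.eq_vc_idv_idh hsg hz]
  rw [hPhi.map_vc _ _ (by rw [h1.idh_eq]; exact D.b_idv_eq_t_idh g), hPhi.map_idh,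
    hPhi.map_of_box_eq_Theta _ ⟨D.sV g, by exact (D.id_id _).symm⟩]
  exact (h2.eq_vc_idv_idh hsg' hz).symm

section Cohomologous

variable (h1 : IsSmashStructure D Kb Ac sg ta DB1) (h2 : IsSmashStructure D Kb Ac sg' ta' DB2)
  (hsg : ∀ F G, D.b F = D.t G → Kb.proj (sg F G) = D.eV (D.l G))
  (hta : ∀ F G, D.r F = D.l G → Kb.proj (ta F G) = D.eV (D.l F))
  (hsg' : ∀ F G, D.b F = D.t G → Kb.proj (sg' F G) = D.eV (D.l G))
  (hta' : ∀ F G, D.r F = D.l G → Kb.proj (ta' F G) = D.eV (D.l F))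
include h1 h2 hsg hta hsg' hta'

theorem map_fib (z : SmashCarrier D Kb) :
    (Phi z).fib = Kb.add z.fib (translationCochain Phi z.box) := by
  conv_lhs => rw [h1.eq_hc_idh_ofBox hta z]
  rw [hPhi.map_hc _ _ (by exact D.idh_r _), hPhi.map_eq_self_of_box_eq_idh h1 h2 hsg hsg' rfl,
    h2.hc_fib_of_box_eq_idh hta' (by rw [hPhi.box_map]; rfl)]
  rfl

theorem sg_eq_add_dV11 {F G : B} (hFG : D.b F = D.t G) :
    sg F G = Kb.add (sg' F G) (dV11 D Kb Ac (translationCochain Phi) F G) := by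
  have hlF : D.eV (D.l F) = D.sV (D.l G) := by rw [← D.corner_bl, hFG, D.corner_tl]
  have key := congrArg fib (hPhi.map_vc (ofBox D Kb F) (ofBox D Kb G) hFG)
  rw [hPhi.map_fib h1 h2 hsg hta hsg' hta', h1.vc_ofBox_fib hsg hFG, h1.vc_box (by exact hFG),
    hPhi.map_ofBox, hPhi.map_ofBox, h2.vc_fib (by exact hFG)] at key
  exact Kb.eq_add_sub_add_of_add_eq (hsg F G hFG)
    (by rw [hPhi.proj_translationCochain, D.vc_l F G hFG, D.eV_mul _ _ hlF])
    (by rw [Ac.aV_proj _ _ (by rw [hPhi.proj_translationCochain, D.eV_inv, hlF]), D.sV_inv])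
    (hPhi.proj_translationCochain G) (hsg' F G hFG) key

theorem ta_eq_add_dH11 {F G : B} (hFG : D.r F = D.l G) :
    ta F G = Kb.add (ta' F G) (dH11 D Kb Ac (translationCochain Phi) F G) := by
  have key := congrArg fib (hPhi.map_hc (ofBox D Kb F) (ofBox D Kb G) hFG)
  rw [hPhi.map_fib h1 h2 hsg hta hsg' hta', h1.hc_ofBox_fib hta hFG, h1.hc_box (by exact hFG),
    hPhi.map_ofBox, hPhi.map_ofBox, h2.hc_fib (by exact hFG)] at key
  exact Kb.eq_add_sub_add_of_add_eq (hta F G hFG)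
    (by rw [hPhi.proj_translationCochain, D.hc_l F G hFG])
    (hPhi.proj_translationCochain F)
    (by rw [Ac.aH_proj _ _ (by rw [hPhi.proj_translationCochain, ← hFG, D.corner_br]),
      D.corner_bl])
    (hta' F G hFG) key

end Cohomologous

end IsExtensionMorphism

end ExtensionMorphism

section Stmt9

variable {B V H P K : Type*}

theorem equivalent_smash_extensions_cohomologous_general
    (D : DGpd B V H P) (Kb : AbBundle P K) (Ac : DAction D Kb)
    (sg ta sg' ta' : B → B → K)
    (hco : IsTotal1Cocycle D Kb Ac sg ta)
    (hco' : IsTotal1Cocycle D Kb Ac sg' ta')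
    (DB1 DB2 : DGpd (SmashCarrier D Kb) V H P)
    (h1 : IsSmashStructure D Kb Ac sg ta DB1)
    (h2 : IsSmashStructure D Kb Ac sg' ta' DB2)
    -- `Φ` is an equivalence of extensions from `K ♯_{σ,τ} F` to `K ♯_{σ',τ'} F`
    (Phi : SmashCarrier D Kb → SmashCarrier D Kb)
    (hhc : ∀ x y, D.r x.val.2 = D.l y.val.2 → Phi (DB1.hc x y) = DB2.hc (Phi x) (Phi y))
    (hvc : ∀ x y, D.b x.val.2 = D.t y.val.2 → Phi (DB1.vc x y) = DB2.vc (Phi x) (Phi y))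
    (hidh : ∀ g : V, Phi (DB1.idh g) = DB2.idh g)
    (hproj : ∀ x, (Phi x).val.2 = x.val.2)
    (hincl : ∀ x : SmashCarrier D Kb, (∃ p, x.val.2 = D.Theta p) → Phi x = x) :
    ∃ lam : B → K, (∀ F : B, Kb.proj (lam F) = D.eV (D.l F)) ∧
      (∀ F G, D.b F = D.t G → sg F G = Kb.add (sg' F G) (dV11 D Kb Ac lam F G)) ∧
      (∀ F G, D.r F = D.l G → ta F G = Kb.add (ta' F G) (dH11 D Kb Ac lam F G)) := by
  have hPhi : IsExtensionMorphism DB1 DB2 Phi := ⟨hhc, hvc, hidh, hproj, hincl⟩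
  exact ⟨translationCochain Phi, hPhi.proj_translationCochain,
    fun _ _ => hPhi.sg_eq_add_dV11 h1 h2 hco.1 hco.2.1 hco'.1 hco'.2.1,
    fun _ _ => hPhi.ta_eq_add_dH11 h1 h2 hco.1 hco.2.1 hco'.1 hco'.2.1⟩

/-- If two smash-product extensions `K ♯_{σ,τ} F` and `K ♯_{σ',τ'} F`
determined by normalized total 1-cocycles are equivalent as extensions of `F` by `K`,
then the cocycles are cohomologous: there is `λ : F → K` with `p ∘ λ = γ`,
`σ = σ' + d_V λ` and `τ = τ' + d_H λ`. -/
theorem equivalent_smash_extensions_cohomologous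
    (D : DGpd B V H P) (Kb : AbBundle P K) (Ac : DAction D Kb)
    (sg ta sg' ta' : B → B → K)
    (hco : IsTotal1Cocycle D Kb Ac sg ta) (hno : IsNormalizedPair D Kb sg ta)
    (hco' : IsTotal1Cocycle D Kb Ac sg' ta') (hno' : IsNormalizedPair D Kb sg' ta')
    (DB1 DB2 : DGpd (SmashCarrier D Kb) V H P)
    (h1 : IsSmashStructure D Kb Ac sg ta DB1)
    (h2 : IsSmashStructure D Kb Ac sg' ta' DB2)
    -- `Φ` is an equivalence of extensions from `K ♯_{σ,τ} F` to `K ♯_{σ',τ'} F`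
    (Phi : SmashCarrier D Kb → SmashCarrier D Kb)
    (hbij : Function.Bijective Phi)
    (hhc : ∀ x y, D.r x.val.2 = D.l y.val.2 → Phi (DB1.hc x y) = DB2.hc (Phi x) (Phi y))
    (hvc : ∀ x y, D.b x.val.2 = D.t y.val.2 → Phi (DB1.vc x y) = DB2.vc (Phi x) (Phi y))
    (hidh : ∀ g : V, Phi (DB1.idh g) = DB2.idh g)
    (hidv : ∀ x : H, Phi (DB1.idv x) = DB2.idv x)
    (hproj : ∀ x, (Phi x).val.2 = x.val.2)
    (hincl : ∀ x : SmashCarrier D Kb, (∃ p, x.val.2 = D.Theta p) → Phi x = x) :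
    ∃ lam : B → K, (∀ F : B, Kb.proj (lam F) = D.eV (D.l F)) ∧
      (∀ F G, D.b F = D.t G → sg F G = Kb.add (sg' F G) (dV11 D Kb Ac lam F G)) ∧
      (∀ F G, D.r F = D.l G → ta F G = Kb.add (ta' F G) (dH11 D Kb Ac lam F G)) :=
  equivalent_smash_extensions_cohomologous_general D Kb Ac sg ta sg' ta' hco hco' DB1 DB2 h1 h2 Phi
    hhc hvc hidh hproj hincl

end Stmt9
end
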